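/- arXiv:2101.09756 — 2 statements merged into one kernel-verified Lean document; each statement's English description precedes it below -/
import Mathlib

section
/- Let γ̂ ∈ Γ(μ̂, ν̂) and let γ be the restriction of γ̂ to X × X. Then γ ∈ Π_≤(μ,ν), and, writing f₁ := dγ₁/dμ and f₂ := dγ₂/dν for the Radon–Nikodym densities (which exist since γ₁ ≤ μ and γ₂ ≤ ν), one has γ̂ = γ + ((1 − f₁)μ) ⊗ δ_ŝ + δ_ŝ ⊗ ((1 − f₂)ν) + γ(X×X)·δ_{(ŝ,ŝ)}. -/
open MeasureTheory

/-- The set `Π_≤(μ,ν)` of plans whose marginals are dominated by `μ` and `ν`. -/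
def PiLe {X : Type*} [MeasurableSpace X] (μ ν : Measure X) : Set (Measure (X × X)) :=
  {γ | γ.map Prod.fst ≤ μ ∧ γ.map Prod.snd ≤ ν}

/-- The isolated extra point `ŝ` of the one-point extension `X̂ := X ⊕ Unit` of `X`. -/
def shat (X : Type*) : X ⊕ Unit := Sum.inr ()

/-- The embedding of `X × X` into `X̂ × X̂`. -/
def prodInl (X : Type*) : X × X → (X ⊕ Unit) × (X ⊕ Unit) :=
  fun p => (Sum.inl p.1, Sum.inl p.2)

/-- The extended measure `μ̂ = μ + ν(X)·δ_ŝ` on `X̂ = X ⊕ Unit`. -/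
noncomputable def muHat {X : Type*} [MeasurableSpace X] (μ ν : Measure X) :
    Measure (X ⊕ Unit) :=
  μ.map Sum.inl + (ν Set.univ) • Measure.dirac (shat X)

/-- `Γ(μ̂,ν̂)`: couplings of `μ̂` and `ν̂` on `X̂ × X̂`. -/
def GammaHat {X : Type*} [MeasurableSpace X] (μ ν : Measure X) :
    Set (Measure ((X ⊕ Unit) × (X ⊕ Unit))) :=
  {γ | γ.map Prod.fst = muHat μ ν ∧ γ.map Prod.snd = muHat ν μ}

/-- The extension of `γ ∈ Π_≤(μ,ν)` to a coupling of `μ̂` and `ν̂`: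
`γ̂ = γ + ((1−f₁)μ) ⊗ δ_ŝ + δ_ŝ ⊗ ((1−f₂)ν) + γ(X×X)·δ_{(ŝ,ŝ)}`,
where `f₁ = dγ₁/dμ` and `f₂ = dγ₂/dν`. -/
noncomputable def extendPlan {X : Type*} [MeasurableSpace X] (μ ν : Measure X)
    (γ : Measure (X × X)) : Measure ((X ⊕ Unit) × (X ⊕ Unit)) :=
  γ.map (prodInl X)
    + ((μ.withDensity (fun x => 1 - (γ.map Prod.fst).rnDeriv μ x)).map Sum.inl).prod
        (Measure.dirac (shat X))
    + (Measure.dirac (shat X)).prod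
        ((ν.withDensity (fun x => 1 - (γ.map Prod.snd).rnDeriv ν x)).map Sum.inl)
    + (γ Set.univ) • Measure.dirac (shat X, shat X)

/-!
A measure on `X̂ × X̂` splits into its blocks on `X × X`, `X × {ŝ}`, `{ŝ} × X` and `{(ŝ, ŝ)}`,
say `γ`, `a ⊗ δ_ŝ`, `δ_ŝ ⊗ b` and `m δ_{(ŝ,ŝ)}`. Comparing the marginals with `μ̂` and `ν̂`
separately on `X` and at `ŝ` gives `μ = γ₁ + a`, `ν = γ₂ + b` and `ν(X) = b(X) + m`. Hence
`γ₁ ≤ μ` and `γ₂ ≤ ν`, finiteness identifies `a = (1 - dγ₁/dμ) μ` and `b = (1 - dγ₂/dν) ν`,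
and `m = ν(X) - b(X) = γ₂(X) = γ(X × X)`.
-/

open Set
open scoped ENNReal

lemma MeasurableEmbedding.inl {α β : Type*} [MeasurableSpace α] [MeasurableSpace β] :
    MeasurableEmbedding (Sum.inl : α → α ⊕ β) :=
  ⟨Sum.inl_injective, measurable_inl, fun _ hs => measurableSet_inl_image.2 hs⟩

lemma MeasurableEmbedding.inr {α β : Type*} [MeasurableSpace α] [MeasurableSpace β] :
    MeasurableEmbedding (Sum.inr : β → α ⊕ β) :=
  ⟨Sum.inr_injective, measurable_inr, fun _ hs => measurableSet_inr_image.2 hs⟩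

namespace MeasureTheory

namespace Measure

variable {α β : Type*} [MeasurableSpace α] [MeasurableSpace β]

lemma withDensity_one_sub_rnDeriv {μ ρ : Measure α} [IsFiniteMeasure ρ] [SigmaFinite μ]
    (h : ρ ≪ μ) : μ.withDensity (fun x => 1 - ρ.rnDeriv μ x) = μ - ρ := by
  have : IsFiniteMeasure (μ.withDensity (ρ.rnDeriv μ)) := by
    rw [withDensity_rnDeriv_eq ρ μ h]
    infer_instance
  rw [show (fun x => 1 - ρ.rnDeriv μ x) = 1 - ρ.rnDeriv μ from rfl,
    withDensity_sub measurable_one (measurable_rnDeriv ρ μ), withDensity_one,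
    withDensity_rnDeriv_eq ρ μ h]

lemma eq_withDensity_one_sub_rnDeriv_of_add_eq {μ ρ τ : Measure α} [IsFiniteMeasure μ]
    (h : ρ + τ = μ) : τ = μ.withDensity (fun x => 1 - ρ.rnDeriv μ x) := by
  have hle : ρ ≤ μ := h ▸ Measure.le_add_right le_rfl
  have : IsFiniteMeasure ρ := isFiniteMeasure_of_le μ hle
  rw [withDensity_one_sub_rnDeriv hle.absolutelyContinuous, ← h, add_comm ρ τ,
    Measure.add_sub_cancel]

lemma comap_inl_map_inl_add_smul_dirac (a : Measure α) (c : ℝ≥0∞) (b : β) :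
    (a.map Sum.inl + c • dirac (Sum.inr b : α ⊕ β)).comap Sum.inl = a := by
  have hdirac : (dirac (Sum.inr b : α ⊕ β)).comap Sum.inl = 0 := by
    ext s hs
    rw [MeasurableEmbedding.inl.comap_apply, dirac_apply' _ (measurableSet_inl_image.2 hs)]
    simp
  rw [MeasurableEmbedding.inl.comap_add, MeasurableEmbedding.inl.comap_map, comap_smul,
    hdirac, smul_zero, add_zero]

lemma map_inl_add_smul_dirac_apply_inr (a : Measure α) (c : ℝ≥0∞) (b : β) :
    (a.map Sum.inl + c • dirac (Sum.inr b) : Measure (α ⊕ β)) {Sum.inr b} = c := by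
  rw [add_apply, MeasurableEmbedding.inl.map_apply, smul_apply,
    dirac_apply_of_mem (mem_singleton _)]
  have : (Sum.inl : α → α ⊕ β) ⁻¹' {Sum.inr b} = ∅ := by ext; simp
  simp [this]

lemma map_inl_add_smul_dirac_injective {a a' : Measure α} {c c' : ℝ≥0∞} {b : β}
    (h : a.map Sum.inl + c • dirac (Sum.inr b) = a'.map Sum.inl + c' • dirac (Sum.inr b)) :
    a = a' ∧ c = c' := by
  constructor
  · rw [← comap_inl_map_inl_add_smul_dirac a c b, h, comap_inl_map_inl_add_smul_dirac]
  · rw [← map_inl_add_smul_dirac_apply_inr a c b, h, map_inl_add_smul_dirac_apply_inr]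

noncomputable def ofBlocks (γ : Measure (α × β)) (a : Measure α) (b : Measure β) (m : ℝ≥0∞) :
    Measure ((α ⊕ Unit) × (β ⊕ Unit)) :=
  γ.map (Prod.map Sum.inl Sum.inl) + a.map (fun x => (Sum.inl x, Sum.inr ()))
    + b.map (fun y => (Sum.inr (), Sum.inl y)) + m • dirac (Sum.inr (), Sum.inr ())

theorem eq_ofBlocks (ρ : Measure ((α ⊕ Unit) × (β ⊕ Unit))) :
    ρ = ofBlocks (ρ.comap (Prod.map Sum.inl Sum.inl)) (ρ.comap fun x => (Sum.inl x, Sum.inr ()))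
      (ρ.comap fun y => (Sum.inr (), Sum.inl y)) (ρ {(Sum.inr (), Sum.inr ())}) := by
  have h₁ : MeasurableEmbedding (Prod.map Sum.inl Sum.inl : α × β → (α ⊕ Unit) × (β ⊕ Unit)) :=
    MeasurableEmbedding.inl.prodMap MeasurableEmbedding.inl
  have h₂ :
      MeasurableEmbedding (fun x : α => ((Sum.inl x, Sum.inr ()) : (α ⊕ Unit) × (β ⊕ Unit))) :=
    (MeasurableEmbedding.inl.prodMap MeasurableEmbedding.inr).comp
      MeasurableEquiv.prodPUnit.symm.measurableEmbedding
  have h₃ :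
      MeasurableEmbedding (fun y : β => ((Sum.inr (), Sum.inl y) : (α ⊕ Unit) × (β ⊕ Unit))) :=
    (MeasurableEmbedding.inr.prodMap MeasurableEmbedding.inl).comp
      MeasurableEquiv.punitProd.symm.measurableEmbedding
  have hcover : range (Prod.map Sum.inl Sum.inl) ∪ range (fun x : α => (Sum.inl x, Sum.inr ()))
      ∪ range (fun y : β => (Sum.inr (), Sum.inl y)) ∪ {(Sum.inr (), Sum.inr ())} = univ := by
    ext ⟨x | u, y | v⟩ <;> simp
  rw [ofBlocks, h₁.map_comap, h₂.map_comap, h₃.map_comap, ← restrict_singleton,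
    ← restrict_union (by simp [disjoint_left]) h₂.measurableSet_range,
    ← restrict_union (by simp [disjoint_left]) h₃.measurableSet_range,
    ← restrict_union' (by simp [disjoint_left])
      ((h₁.measurableSet_range.union h₂.measurableSet_range).union h₃.measurableSet_range),
    hcover, restrict_univ]

lemma map_fst_ofBlocks (γ : Measure (α × β)) (a : Measure α) (b : Measure β) (m : ℝ≥0∞) :
    (ofBlocks γ a b m).map Prod.fst
      = (γ.map Prod.fst + a).map Sum.inl + (b univ + m) • dirac (Sum.inr () : α ⊕ Unit) := by
  have hγ : (γ.map (Prod.map Sum.inl Sum.inl : α × β → (α ⊕ Unit) × (β ⊕ Unit))).map Prod.fst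
      = (γ.map Prod.fst).map (Sum.inl : α → α ⊕ Unit) := by
    rw [map_map measurable_fst (by fun_prop), map_map measurable_inl measurable_fst]
    rfl
  have ha : (a.map fun x => ((Sum.inl x, Sum.inr ()) : (α ⊕ Unit) × (β ⊕ Unit))).map Prod.fst
      = a.map Sum.inl := by
    rw [map_map measurable_fst (by fun_prop)]
    rfl
  have hb : (b.map fun y => ((Sum.inr (), Sum.inl y) : (α ⊕ Unit) × (β ⊕ Unit))).map Prod.fst
      = b univ • dirac (Sum.inr ()) := by
    rw [map_map measurable_fst (by fun_prop)]
    exact map_const b _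
  simp only [ofBlocks, Measure.map_add _ _ measurable_fst, Measure.map_add _ _ measurable_inl,
    Measure.map_smul, map_dirac' measurable_fst, hγ, ha, hb, add_smul]
  abel

lemma map_snd_ofBlocks (γ : Measure (α × β)) (a : Measure α) (b : Measure β) (m : ℝ≥0∞) :
    (ofBlocks γ a b m).map Prod.snd
      = (γ.map Prod.snd + b).map Sum.inl + (a univ + m) • dirac (Sum.inr () : β ⊕ Unit) := by
  have hγ : (γ.map (Prod.map Sum.inl Sum.inl : α × β → (α ⊕ Unit) × (β ⊕ Unit))).map Prod.snd
      = (γ.map Prod.snd).map (Sum.inl : β → β ⊕ Unit) := by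
    rw [map_map measurable_snd (by fun_prop), map_map measurable_inl measurable_snd]
    rfl
  have ha : (a.map fun x => ((Sum.inl x, Sum.inr ()) : (α ⊕ Unit) × (β ⊕ Unit))).map Prod.snd
      = a univ • dirac (Sum.inr ()) := by
    rw [map_map measurable_snd (by fun_prop)]
    exact map_const a _
  have hb : (b.map fun y => ((Sum.inr (), Sum.inl y) : (α ⊕ Unit) × (β ⊕ Unit))).map Prod.snd
      = b.map Sum.inl := by
    rw [map_map measurable_snd (by fun_prop)]
    rfl
  simp only [ofBlocks, Measure.map_add _ _ measurable_snd, Measure.map_add _ _ measurable_inl,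
    Measure.map_smul, map_dirac' measurable_snd, hγ, ha, hb, add_smul]
  abel

lemma map_le_and_ofBlocks_eq_of_marginals {μ : Measure α} {ν : Measure β} [IsFiniteMeasure μ]
    [IsFiniteMeasure ν] {γ : Measure (α × β)} {a : Measure α} {b : Measure β} {m : ℝ≥0∞}
    (h₁ : (ofBlocks γ a b m).map Prod.fst = μ.map Sum.inl + ν univ • dirac (Sum.inr ()))
    (h₂ : (ofBlocks γ a b m).map Prod.snd = ν.map Sum.inl + μ univ • dirac (Sum.inr ())) :
    γ.map Prod.fst ≤ μ ∧ γ.map Prod.snd ≤ ν ∧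
      ofBlocks γ a b m = ofBlocks γ (μ.withDensity fun x => 1 - (γ.map Prod.fst).rnDeriv μ x)
        (ν.withDensity fun y => 1 - (γ.map Prod.snd).rnDeriv ν y) (γ univ) := by
  rw [map_fst_ofBlocks] at h₁
  rw [map_snd_ofBlocks] at h₂
  obtain ⟨hμ, hνuniv⟩ := map_inl_add_smul_dirac_injective h₁
  obtain ⟨hν, -⟩ := map_inl_add_smul_dirac_injective h₂
  have : IsFiniteMeasure b := isFiniteMeasure_of_le ν (hν ▸ Measure.le_add_left le_rfl)
  have hm : m = γ univ := by
    apply (ENNReal.add_right_inj (measure_ne_top b univ)).1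
    rw [hνuniv, ← hν, add_apply, add_comm, map_apply measurable_snd .univ, preimage_univ]
  refine ⟨hμ ▸ Measure.le_add_right le_rfl, hν ▸ Measure.le_add_right le_rfl, ?_⟩
  rw [← eq_withDensity_one_sub_rnDeriv_of_add_eq hμ, ← eq_withDensity_one_sub_rnDeriv_of_add_eq hν,
    hm]

end Measure

end MeasureTheory

open MeasureTheory.Measure

lemma prodInl_eq (X : Type*) : prodInl X = Prod.map Sum.inl Sum.inl := rfl

lemma extendPlan_eq_ofBlocks {X : Type*} [MeasurableSpace X] (μ ν : Measure X) [SFinite μ]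
    [SFinite ν] (γ : Measure (X × X)) :
    extendPlan μ ν γ = ofBlocks γ (μ.withDensity fun x => 1 - (γ.map Prod.fst).rnDeriv μ x)
      (ν.withDensity fun y => 1 - (γ.map Prod.snd).rnDeriv ν y) (γ univ) := by
  rw [extendPlan, prod_dirac, dirac_prod, map_map (by fun_prop) measurable_inl,
    map_map (by fun_prop) measurable_inl]
  rfl

theorem stmt6_general {X : Type*} [MeasurableSpace X]
    (μ ν : Measure X) [IsFiniteMeasure μ] [IsFiniteMeasure ν]
    (γhat : Measure ((X ⊕ Unit) × (X ⊕ Unit))) (hγhat : γhat ∈ GammaHat μ ν) :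
    γhat.comap (prodInl X) ∈ PiLe μ ν ∧
    γhat = extendPlan μ ν (γhat.comap (prodInl X)) := by
  obtain ⟨hfst, hsnd⟩ := hγhat
  rw [eq_ofBlocks γhat] at hfst hsnd
  obtain ⟨hle₁, hle₂, hblocks⟩ := map_le_and_ofBlocks_eq_of_marginals hfst hsnd
  rw [prodInl_eq, extendPlan_eq_ofBlocks]
  exact ⟨⟨hle₁, hle₂⟩, (eq_ofBlocks γhat).trans hblocks⟩

/-- if `γ̂ ∈ Γ(μ̂,ν̂)` and `γ` is the restriction of `γ̂` to `X × X`, then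
`γ ∈ Π_≤(μ,ν)` and `γ̂ = γ + ((1−f₁)μ)⊗δ_ŝ + δ_ŝ⊗((1−f₂)ν) + γ(X×X)·δ_{(ŝ,ŝ)}`. -/
theorem stmt6 {X : Type*} [MetricSpace X] [CompactSpace X] [MeasurableSpace X] [BorelSpace X]
    (μ ν : Measure X) [IsFiniteMeasure μ] [IsFiniteMeasure ν]
    (γhat : Measure ((X ⊕ Unit) × (X ⊕ Unit))) (hγhat : γhat ∈ GammaHat μ ν) :
    γhat.comap (prodInl X) ∈ PiLe μ ν ∧
    γhat = extendPlan μ ν (γhat.comap (prodInl X)) :=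
  stmt6_general μ ν γhat hγhat
end

section
/- For every admissible α one has ET̃_λ^α(μ,ν) = b·∑_{v∈V∖{r}} ω_{e(v)} |μ(Λ(v)) − ν(Λ(v))| − (bλ/2)(μ(V) + ν(V)) + (w_i(r) + bλ/2 − α)·|μ(V) − ν(V)|, where i = 1 if μ(V) ≥ ν(V) and i = 2 if μ(V) < ν(V). In particular, the map α ↦ ET̃_λ^α(μ,ν) is nonincreasing and |ET̃_λ^{α₁}(μ,ν) − ET̃_λ^{α₂}(μ,ν)| = |α₁ − α₂|·|μ(V) − ν(V)| for all admissible α₁, α₂. -/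
open SimpleGraph

/-- The unique path (as a walk) from `x` to `y` in a tree `G`. -/
noncomputable def treePath {V : Type*} {G : SimpleGraph V} (hG : G.IsTree) (x y : V) :
    G.Walk x y :=
  (hG.existsUnique_path x y).exists.choose

/-- The tree metric `d_T x y`: the sum of the lengths of the edges on the unique path
from `x` to `y`. -/
noncomputable def treeDist {V : Type*} {G : SimpleGraph V} (hG : G.IsTree)
    (ω : Sym2 V → ℝ) (x y : V) : ℝ :=
  ((treePath hG x y).edges.map ω).sum

/-- The parent of a vertex `v` in the tree rooted at `r`: its neighbor on the unique path
from `r` to `v` (i.e. the vertex preceding `v` on that path). -/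
noncomputable def treeParent {V : Type*} {G : SimpleGraph V} (hG : G.IsTree) (r v : V) : V :=
  (treePath hG r v).reverse.getVert 1

/-- The edge `e(v)` joining a (non-root) vertex `v` to its parent. -/
noncomputable def edgeToParent {V : Type*} {G : SimpleGraph V} (hG : G.IsTree) (r v : V) :
    Sym2 V :=
  s(treeParent hG r v, v)

/-- The set of vertices lying on the unique path from `r` to `x`. -/
noncomputable def pathVerts {V : Type*} [DecidableEq V] {G : SimpleGraph V} (hG : G.IsTree)
    (r x : V) : Finset V :=
  (treePath hG r x).support.toFinset

/-- The subtree `Λ(v)` below `v`: all vertices `u` such that `v` lies on the unique path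
from the root `r` to `u`. -/
noncomputable def subtreeBelow {V : Type*} [DecidableEq V] [Fintype V] {G : SimpleGraph V}
    (hG : G.IsTree) (r v : V) : Finset V :=
  Finset.univ.filter (fun u => v ∈ (treePath hG r u).support)
/-- The family `𝕃_α` of test functions on the tree: functions of the form
`f(x) = s + ∑_{v on the path r→x, v ≠ r} ω_{e(v)} g(v)` with
`−w₂(r) − bλ/2 + α ≤ s ≤ w₁(r) + bλ/2 − α` and `|g| ≤ b`. -/
def Lalpha {V : Type*} [Fintype V] [DecidableEq V] {G : SimpleGraph V} (hG : G.IsTree)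
    (r : V) (ω : Sym2 V → ℝ) (b lam w1r w2r α : ℝ) : Set (V → ℝ) :=
  {f | ∃ (s : ℝ) (g : V → ℝ),
    (-w2r - b * lam / 2 + α ≤ s ∧ s ≤ w1r + b * lam / 2 - α) ∧
    (∀ v : V, v ≠ r → |g v| ≤ b) ∧
    ∀ x : V, f x = s + ∑ v ∈ (pathVerts hG r x).erase r, ω (edgeToParent hG r v) * g v}

/-- The regularized entropy partial transport value
`ET̃_λ^α(μ,ν) = sup{ ∑_x f(x)(μ(x) − ν(x)) : f ∈ 𝕃_α } − (bλ/2)(μ(V) + ν(V))`. -/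
noncomputable def ETtilde {V : Type*} [Fintype V] [DecidableEq V] {G : SimpleGraph V}
    (hG : G.IsTree) (r : V) (ω : Sym2 V → ℝ) (b lam w1r w2r α : ℝ) (μ ν : V → ℝ) : ℝ :=
  sSup {t : ℝ | ∃ f ∈ Lalpha hG r ω b lam w1r w2r α,
      t = ∑ x : V, f x * (μ x - ν x)}
    - b * lam / 2 * ((∑ v : V, μ v) + ∑ v : V, ν v)

/-!
Exchanging the order of summation, the pairing of a test function
`f = s + ∑_{v ∈ [r, x], v ≠ r} ω_{e(v)} g(v)` with a signed measure `m` becomes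
`s · m(V) + ∑_{v ≠ r} ω_{e(v)} g(v) m(Λ(v))`. The constraints on `s` and on the values
`g(v)` are independent of each other, so the supremum is attained by taking `s` at the
endpoint of its interval selected by the sign of `m(V)`, and `g(v) = ±b` according to the
sign of `m(Λ(v))`. With `m = μ - ν` this is the closed form; `α` only enters through the
endpoint for `s`, hence linearly with slope `-|μ(V) - ν(V)|`.
-/

open Finset

theorem mul_le_ite_mul_abs {p q s d : ℝ} (hq : -q ≤ s) (hp : s ≤ p) :
    s * d ≤ (if 0 ≤ d then p else q) * |d| := by
  split_ifs with hd
  · rw [abs_of_nonneg hd]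
    exact mul_le_mul_of_nonneg_right hp hd
  · rw [abs_of_neg (not_le.mp hd)]
    nlinarith

theorem ite_neg_mul_eq_ite_mul_abs (p q d : ℝ) :
    (if 0 ≤ d then p else -q) * d = (if 0 ≤ d then p else q) * |d| := by
  split_ifs with hd
  · rw [abs_of_nonneg hd]
  · rw [abs_of_neg (not_le.mp hd)]
    ring

theorem edgeToParent_mem_edgeSet {V : Type*} {G : SimpleGraph V} (hG : G.IsTree) {r v : V}
    (hv : v ≠ r) : edgeToParent hG r v ∈ G.edgeSet := by
  have hlen : 0 < (treePath hG r v).reverse.length := by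
    rw [Walk.length_reverse, Nat.pos_iff_ne_zero]
    intro h0
    have hrv := (treePath hG r v).getVert_length
    rw [h0, Walk.getVert_zero] at hrv
    exact hv hrv.symm
  have hadj := (treePath hG r v).reverse.adj_getVert_succ hlen
  rw [Walk.getVert_zero] at hadj
  exact hadj.symm

section Tree

variable {V : Type*} [Fintype V] [DecidableEq V] {G : SimpleGraph V} (hG : G.IsTree) (r : V)

theorem sum_pathVerts_erase_mul {R : Type*} [NonUnitalNonAssocSemiring R] (c m : V → R) :
    ∑ x, (∑ v ∈ (pathVerts hG r x).erase r, c v) * m x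
      = ∑ v ∈ univ.erase r, c v * ∑ u ∈ subtreeBelow hG r v, m u := by
  simp_rw [sum_mul, mul_sum]
  refine sum_comm' fun x v => ?_
  simp only [pathVerts, subtreeBelow, mem_erase, mem_filter, List.mem_toFinset, mem_univ,
    true_and, and_true]
  tauto

theorem sum_pathFunction_mul (ω : Sym2 V → ℝ) (s : ℝ) (g m : V → ℝ) :
    ∑ x, (s + ∑ v ∈ (pathVerts hG r x).erase r, ω (edgeToParent hG r v) * g v) * m x
      = s * ∑ x, m x
        + ∑ v ∈ univ.erase r, ω (edgeToParent hG r v) * g v * ∑ u ∈ subtreeBelow hG r v, m u := by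
  simp_rw [add_mul, sum_add_distrib, ← mul_sum, sum_pathVerts_erase_mul]

variable {ω : Sym2 V → ℝ} {b lam w1r w2r α : ℝ}

theorem isGreatest_pairing_Lalpha (hω : ∀ e ∈ G.edgeSet, 0 ≤ ω e) (hb : 0 ≤ b)
    (hα : α ≤ (b * lam + w1r + w2r) / 2) (m : V → ℝ) :
    IsGreatest {t | ∃ f ∈ Lalpha hG r ω b lam w1r w2r α, t = ∑ x, f x * m x}
      (b * ∑ v ∈ univ.erase r, ω (edgeToParent hG r v) * |∑ u ∈ subtreeBelow hG r v, m u|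
        + ((if 0 ≤ ∑ x, m x then w1r else w2r) + b * lam / 2 - α) * |∑ x, m x|) := by
  set p := w1r + b * lam / 2 - α with hp
  set q := w2r + b * lam / 2 - α with hq
  have hcoef : ∀ d : ℝ, ((if 0 ≤ d then w1r else w2r) + b * lam / 2 - α)
      = if 0 ≤ d then p else q := fun d => by split_ifs <;> rfl
  have hedge : ∀ v ∈ univ.erase r, ∀ y d : ℝ, |y| ≤ b →
      ω (edgeToParent hG r v) * y * d ≤ b * (ω (edgeToParent hG r v) * |d|) := by
    intro v hv y d hy
    obtain ⟨hy₁, hy₂⟩ := abs_le.mp hy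
    have hyd := mul_le_ite_mul_abs (d := d) hy₁ hy₂
    rw [ite_self] at hyd
    have hωv := hω _ (edgeToParent_mem_edgeSet hG (mem_erase.mp hv).1)
    nlinarith
  simp_rw [hcoef, mul_sum]
  refine ⟨⟨_, ⟨if 0 ≤ ∑ x, m x then p else -q,
      fun v => if 0 ≤ ∑ u ∈ subtreeBelow hG r v, m u then b else -b, ?_, ?_, fun _ => rfl⟩, ?_⟩,
    ?_⟩
  · split_ifs <;> constructor <;> linarith
  · intro v _
    dsimp only
    split_ifs <;> simp [abs_of_nonneg hb]
  · rw [sum_pathFunction_mul, add_comm, ite_neg_mul_eq_ite_mul_abs]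
    congr 1
    refine sum_congr rfl fun v _ => ?_
    rw [mul_assoc, ite_neg_mul_eq_ite_mul_abs, ite_self]
    ring
  · rintro t ⟨f, ⟨s, g, ⟨hs, hs'⟩, hg, hf⟩, rfl⟩
    simp_rw [hf, sum_pathFunction_mul, add_comm (s * _)]
    exact add_le_add (sum_le_sum fun v hv => hedge v hv _ _ (hg v (mem_erase.mp hv).1))
      (mul_le_ite_mul_abs (by linarith) hs')

theorem ETtilde_eq (hω : ∀ e ∈ G.edgeSet, 0 ≤ ω e) (hb : 0 ≤ b)
    (hα : α ≤ (b * lam + w1r + w2r) / 2) (μ ν : V → ℝ) :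
    ETtilde hG r ω b lam w1r w2r α μ ν =
      b * ∑ v ∈ univ.erase r, ω (edgeToParent hG r v) *
          |(∑ u ∈ subtreeBelow hG r v, μ u) - ∑ u ∈ subtreeBelow hG r v, ν u|
        - b * lam / 2 * ((∑ v, μ v) + ∑ v, ν v)
        + ((if (∑ v, ν v) ≤ ∑ v, μ v then w1r else w2r) + b * lam / 2 - α) *
            |(∑ v, μ v) - ∑ v, ν v| := by
  have h := (isGreatest_pairing_Lalpha hG r hω hb hα (μ - ν)).csSup_eq
  simp only [Pi.sub_apply, sum_sub_distrib, sub_nonneg] at h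
  rw [ETtilde, h]
  ring

theorem ETtilde_sub_ETtilde (hω : ∀ e ∈ G.edgeSet, 0 ≤ ω e) (hb : 0 ≤ b) {α₁ α₂ : ℝ}
    (hα₁ : α₁ ≤ (b * lam + w1r + w2r) / 2) (hα₂ : α₂ ≤ (b * lam + w1r + w2r) / 2)
    (μ ν : V → ℝ) :
    ETtilde hG r ω b lam w1r w2r α₁ μ ν - ETtilde hG r ω b lam w1r w2r α₂ μ ν
      = (α₂ - α₁) * |(∑ v, μ v) - ∑ v, ν v| := by
  rw [ETtilde_eq hG r hω hb hα₁, ETtilde_eq hG r hω hb hα₂]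
  ring

end Tree

theorem stmt15_general {V : Type*} [Fintype V] [DecidableEq V]
    (G : SimpleGraph V) (hG : G.IsTree) (r : V)
    (ω : Sym2 V → ℝ) (hω : ∀ e ∈ G.edgeSet, 0 ≤ ω e)
    (b lam w1r w2r : ℝ) (hb : 0 ≤ b)
    (μ ν : V → ℝ) :
    (∀ α : ℝ, 0 ≤ α → α ≤ (b * lam + w1r + w2r) / 2 →
      ETtilde hG r ω b lam w1r w2r α μ ν =
        b * ∑ v ∈ Finset.univ.erase r, ω (edgeToParent hG r v) *
            |(∑ u ∈ subtreeBelow hG r v, μ u) - ∑ u ∈ subtreeBelow hG r v, ν u|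
          - b * lam / 2 * ((∑ v : V, μ v) + ∑ v : V, ν v)
          + ((if (∑ v : V, ν v) ≤ ∑ v : V, μ v then w1r else w2r) + b * lam / 2 - α) *
              |(∑ v : V, μ v) - ∑ v : V, ν v|) ∧
    (∀ α₁ α₂ : ℝ, 0 ≤ α₁ → α₂ ≤ (b * lam + w1r + w2r) / 2 → α₁ ≤ α₂ →
      ETtilde hG r ω b lam w1r w2r α₂ μ ν ≤ ETtilde hG r ω b lam w1r w2r α₁ μ ν) ∧
    (∀ α₁ α₂ : ℝ, 0 ≤ α₁ → α₁ ≤ (b * lam + w1r + w2r) / 2 →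
      0 ≤ α₂ → α₂ ≤ (b * lam + w1r + w2r) / 2 →
      |ETtilde hG r ω b lam w1r w2r α₁ μ ν - ETtilde hG r ω b lam w1r w2r α₂ μ ν|
        = |α₁ - α₂| * |(∑ v : V, μ v) - ∑ v : V, ν v|) := by
  refine ⟨fun α _ hα => ETtilde_eq hG r hω hb hα μ ν, fun α₁ α₂ _ hα₂ h₁₂ => ?_,
    fun α₁ α₂ _ hα₁ _ hα₂ => ?_⟩
  · have h := ETtilde_sub_ETtilde hG r hω hb (h₁₂.trans hα₂) hα₂ μ ν
    have := mul_nonneg (sub_nonneg.mpr h₁₂) (abs_nonneg ((∑ v, μ v) - ∑ v, ν v))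
    linarith
  · rw [ETtilde_sub_ETtilde hG r hω hb hα₁ hα₂, abs_mul, abs_abs, abs_sub_comm]

/-- closed form for the regularized entropy partial transport `ET̃_λ^α`,
monotonicity in `α`, and the exact difference formula. -/
theorem stmt15 {V : Type*} [Fintype V] [DecidableEq V]
    (G : SimpleGraph V) (hG : G.IsTree) (r : V)
    (ω : Sym2 V → ℝ) (hω : ∀ e ∈ G.edgeSet, 0 ≤ ω e)
    (b lam w1r w2r : ℝ) (hb : 0 ≤ b) (hlam : 0 ≤ lam) (hw1r : 0 ≤ w1r) (hw2r : 0 ≤ w2r)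
    (μ ν : V → ℝ) (hμ : ∀ v, 0 ≤ μ v) (hν : ∀ v, 0 ≤ ν v) :
    (∀ α : ℝ, 0 ≤ α → α ≤ (b * lam + w1r + w2r) / 2 →
      ETtilde hG r ω b lam w1r w2r α μ ν =
        b * ∑ v ∈ Finset.univ.erase r, ω (edgeToParent hG r v) *
            |(∑ u ∈ subtreeBelow hG r v, μ u) - ∑ u ∈ subtreeBelow hG r v, ν u|
          - b * lam / 2 * ((∑ v : V, μ v) + ∑ v : V, ν v)
          + ((if (∑ v : V, ν v) ≤ ∑ v : V, μ v then w1r else w2r) + b * lam / 2 - α) *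
              |(∑ v : V, μ v) - ∑ v : V, ν v|) ∧
    (∀ α₁ α₂ : ℝ, 0 ≤ α₁ → α₂ ≤ (b * lam + w1r + w2r) / 2 → α₁ ≤ α₂ →
      ETtilde hG r ω b lam w1r w2r α₂ μ ν ≤ ETtilde hG r ω b lam w1r w2r α₁ μ ν) ∧
    (∀ α₁ α₂ : ℝ, 0 ≤ α₁ → α₁ ≤ (b * lam + w1r + w2r) / 2 →
      0 ≤ α₂ → α₂ ≤ (b * lam + w1r + w2r) / 2 →
      |ETtilde hG r ω b lam w1r w2r α₁ μ ν - ETtilde hG r ω b lam w1r w2r α₂ μ ν|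
        = |α₁ - α₂| * |(∑ v : V, μ v) - ∑ v : V, ν v|) :=
  stmt15_general G hG r ω hω b lam w1r w2r hb μ ν
end
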